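/- (Identifiability direction of Proposition 1.) Let I be a finite set of objects containing a distinguished object 1. Let r, r' : I → ℝ with r(1) = r'(1) = 0, and let θ, θ' : I × I → ℝ be antisymmetric (θ(i,j) = −θ(j,i) for all i, j, and likewise for θ'). Suppose G is a connected simple graph on vertex set I such that θ(i,j) = θ'(i,j) for every edge {i,j} of G. If σ(θ(i,j) + r(i) − r(j)) = σ(θ'(i,j) + r'(i) − r'(j)) for all i ≠ j in I, then r = r' and θ = θ' on all pairs. -/

import Mathlib

/-- The logistic function σ(x) = 1/(1 + exp(−x)). -/
noncomputable def logistic (x : ℝ) : ℝ := 1 / (1 + Real.exp (-x))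

lemma logistic_injective : Function.Injective logistic := by
  intro a b hab
  unfold logistic at hab
  have ha : (0:ℝ) < 1 + Real.exp (-a) := by positivity
  have hb : (0:ℝ) < 1 + Real.exp (-b) := by positivity
  field_simp at hab
  simpa using hab.symm

/-- Identifiability direction of Proposition 1: if the intransitivity parameters agree on
the edges of a connected graph, the skills are normalized at a distinguished object, and
the two parameterizations give the same ICBT probabilities on all distinct pairs, then
the skills and all intransitivity parameters coincide. -/
theorem icbt_identifiable {I : Type*} [Fintype I] (one : I)
    (r r' : I → ℝ) (hr1 : r one = 0) (hr'1 : r' one = 0)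
    (θ θ' : I → I → ℝ)
    (hθanti : ∀ i j, θ i j = - θ j i) (hθ'anti : ∀ i j, θ' i j = - θ' j i)
    (G : SimpleGraph I) (hG : G.Connected)
    (hfix : ∀ i j, G.Adj i j → θ i j = θ' i j)
    (hprob : ∀ i j, i ≠ j →
      logistic (θ i j + r i - r j) = logistic (θ' i j + r' i - r' j)) :
    r = r' ∧ θ = θ' := by
  have key : ∀ i j, i ≠ j → θ i j + r i - r j = θ' i j + r' i - r' j := by
    intro i j hij
    exact logistic_injective (hprob i j hij)
  have hedge : ∀ i j, G.Adj i j → r i - r' i = r j - r' j := by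
    intro i j hij
    have h := key i j (G.ne_of_adj hij)
    have h2 := hfix i j hij
    linarith
  have hconst : ∀ i, r i - r' i = r one - r' one := by
    intro i
    obtain ⟨w⟩ := (hG one i).symm
    induction w with
    | nil => rfl
    | cons h p ih => rw [hedge _ _ h, ih hr1 hr'1]
  have hrr : r = r' := by
    funext i
    have := hconst i
    rw [hr1, hr'1] at this
    linarith
  refine ⟨hrr, ?_⟩
  funext i j
  by_cases hij : i = j
  · subst hij
    have h1 := hθanti i i
    have h2 := hθ'anti i i
    linarith
  · have := key i j hij
    rw [hrr] at this
    linarith
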